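/- arXiv:math/0407490 — 8 statements merged into one kernel-verified Lean document; each statement's English description precedes it below -/
import Mathlib

section
/- For all ξ, η ∈ ℂ and r ∈ ℝ one has Φ(ξ,η,r) = Φ(ξ,η,0) + r·e₀(ξ), the vector Φ(ξ,η,0) is Euclidean-orthogonal to e₀(ξ), and e₀(ξ) has unit Euclidean norm. Consequently, for fixed (ξ,η) the map r ↦ Φ(ξ,η,r) is a unit-speed parametrization of the oriented affine line in ℝ³ with direction e₀(ξ) whose closest point to the origin is Φ(ξ,η,0). -/
open Complex ComplexConjugate

/-- The map `Φ : 𝕋 × ℝ → ℝ³ = ℂ × ℝ` sending a line `(ξ,η)` and parameter `r`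
to the point a distance `r` along the line. -/
noncomputable def Phi (ξ η : ℂ) (r : ℝ) : ℂ × ℝ :=
  ((2 * (η - conj η * ξ ^ 2) + 2 * ξ * (1 + normSq ξ) * (r : ℂ)) / (1 + normSq ξ) ^ 2,
   (-2 * (η * conj ξ + conj η * ξ).re + (1 - normSq ξ ^ 2) * r) / (1 + normSq ξ) ^ 2)

/-- The unit direction vector of the line with direction `ξ` (inverse stereographic
projection of `ξ`), as a vector in `ℝ³ = ℂ × ℝ`. -/
noncomputable def e0 (ξ : ℂ) : ℂ × ℝ :=
  (2 * ξ / (1 + normSq ξ), (1 - normSq ξ) / (1 + normSq ξ))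

/-- The Euclidean inner product on `ℝ³ = ℂ × ℝ`. -/
noncomputable def euclInner (p q : ℂ × ℝ) : ℝ :=
  (p.1 * conj q.1).re + p.2 * q.2

/-!
Up to the positive factors `(1 + |ξ|²)⁻¹` and `(1 + |ξ|²)⁻²`, `e₀(ξ)` and `Φ(ξ,η,0)` are
`(2ξ, 1 - |ξ|²)` and `(2(η - η̄ξ²), -4 Re(ηξ̄))`. The first has squared length
`4|ξ|² + (1 - |ξ|²)² = (1 + |ξ|²)²`, and `Re((η - η̄ξ²)ξ̄) = (1 - |ξ|²) Re(ηξ̄)` makes the two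
orthogonal. The affine dependence on `r` is read off the formula for `Φ`.
-/

lemma one_add_normSq_pos (ξ : ℂ) : 0 < 1 + normSq ξ := by
  linarith [normSq_nonneg ξ]

lemma euclInner_smul_left (a : ℝ) (p q : ℂ × ℝ) :
    euclInner (a • p) q = a * euclInner p q := by
  simp only [euclInner, Prod.smul_fst, Prod.smul_snd, real_smul, smul_eq_mul, mul_assoc,
    re_ofReal_mul]
  ring

lemma euclInner_comm (p q : ℂ × ℝ) : euclInner p q = euclInner q p := by
  rw [euclInner, euclInner, ← conj_re, map_mul, conj_conj, mul_comm, mul_comm p.2]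

lemma euclInner_smul_right (a : ℝ) (p q : ℂ × ℝ) :
    euclInner p (a • q) = a * euclInner p q := by
  rw [euclInner_comm, euclInner_smul_left, euclInner_comm]

noncomputable def e0Numerator (ξ : ℂ) : ℂ × ℝ :=
  (2 * ξ, 1 - normSq ξ)

noncomputable def PhiZeroNumerator (ξ η : ℂ) : ℂ × ℝ :=
  (2 * (η - conj η * ξ ^ 2), -2 * (η * conj ξ + conj η * ξ).re)

lemma e0_eq_smul (ξ : ℂ) : e0 ξ = (1 + normSq ξ)⁻¹ • e0Numerator ξ := by
  ext <;> simp [e0, e0Numerator, div_eq_inv_mul]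

lemma Phi_zero_eq_smul (ξ η : ℂ) : Phi ξ η 0 = ((1 + normSq ξ) ^ 2)⁻¹ • PhiZeroNumerator ξ η := by
  ext <;> simp [Phi, PhiZeroNumerator, div_eq_inv_mul]

lemma Phi_eq_Phi_zero_add_smul_e0 (ξ η : ℂ) (r : ℝ) : Phi ξ η r = Phi ξ η 0 + r • e0 ξ := by
  have h := (one_add_normSq_pos ξ).ne'
  have hc : (1 + normSq ξ : ℂ) ≠ 0 := by exact_mod_cast h
  ext
  · simp only [Phi, e0, Prod.fst_add, Prod.smul_fst, real_smul, ofReal_zero]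
    field_simp
    ring
  · simp only [Phi, e0, Prod.snd_add, Prod.smul_snd, smul_eq_mul]
    field_simp
    ring

lemma euclInner_e0Numerator_self (ξ : ℂ) :
    euclInner (e0Numerator ξ) (e0Numerator ξ) = (1 + normSq ξ) ^ 2 := by
  have : 2 * ξ * conj (2 * ξ) = (4 * normSq ξ : ℝ) := by
    rw [map_mul, map_ofNat, mul_mul_mul_comm, mul_conj]
    push_cast
    ring
  rw [euclInner, e0Numerator, this, ofReal_re]
  ring

lemma euclInner_PhiZeroNumerator_e0Numerator (ξ η : ℂ) :
    euclInner (PhiZeroNumerator ξ η) (e0Numerator ξ) = 0 := by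
  have : 2 * (η - conj η * ξ ^ 2) * conj (2 * ξ) =
      4 * (η * conj ξ) - 4 * normSq ξ * (conj η * ξ) := by
    rw [map_mul, map_ofNat]
    linear_combination (-4 * conj η * ξ) * mul_conj ξ
  simp only [euclInner, PhiZeroNumerator, e0Numerator, this, sub_re, mul_re, re_ofNat, conj_re,
    conj_im, mul_neg, sub_neg_eq_add, im_ofNat, mul_im, zero_mul, sub_zero, ofReal_re, ofReal_im,
    mul_zero, neg_mul, add_zero, add_re]
  ring

/-- `Φ(ξ,η,r) = Φ(ξ,η,0) + r·e₀(ξ)`, the vector `Φ(ξ,η,0)` is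
Euclidean-orthogonal to `e₀(ξ)`, and `e₀(ξ)` is a unit vector. -/
theorem phi_line_param (ξ η : ℂ) (r : ℝ) :
    Phi ξ η r = Phi ξ η 0 + r • e0 ξ ∧
    euclInner (Phi ξ η 0) (e0 ξ) = 0 ∧
    euclInner (e0 ξ) (e0 ξ) = 1 := by
  refine ⟨Phi_eq_Phi_zero_add_smul_e0 ξ η r, ?_, ?_⟩
  · rw [Phi_zero_eq_smul, e0_eq_smul, euclInner_smul_left, euclInner_smul_right,
      euclInner_PhiZeroNumerator_e0Numerator, mul_zero, mul_zero]
  · have h := (one_add_normSq_pos ξ).ne'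
    rw [e0_eq_smul, euclInner_smul_left, euclInner_smul_right, euclInner_e0Numerator_self]
    field_simp
end

section
/- Let θ, C₁, C₂, C₅ ∈ ℝ with C₂ ≠ 0, and let I ⊆ ℝ be an open interval on which cos(C₂s) ≠ 0. Then the curve ξ(s) = tan(C₂s)·e^{iθ}, η(s) = (C₅·sin(2C₂s) − i·C₁·s)/(4C₂·cos²(C₂s))·e^{iθ} satisfies the geodesic equations of the neutral Kähler metric on I: ξ'' − 2·conj(ξ)·(ξ')²/(1+|ξ|²) = 0 and η'' − 4·conj(ξ)·ξ'·η'/(1+|ξ|²) + 2·(conj(η)+conj(ξ)²·η)·(ξ')²/(1+|ξ|²)² = 0. -/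
/-!
The left-hand sides of the geodesic equations get multiplied by `z` when the curve `(ξ, η)` is
multiplied by a unit complex number `z`, so the phase `e^{iθ}` can be dropped. Where
`cos (C₂ s) ≠ 0` the remaining curve is `ξ = tan (C₂ s)`, `η = a ξ - i b s (1 + ξ²)` with `a, b`
real. As `ξ' = C₂ (1 + ξ²)`, every derivative in the equations is a polynomial in `ξ` and `s`,
and the equations become polynomial identities once `1 + ξ²` is cleared.
-/

open Complex ComplexConjugate

open Filter Topology

noncomputable def xiResidual (ξ : ℝ → ℂ) (s : ℝ) : ℂ :=
  deriv (deriv ξ) s - 2 * conj (ξ s) * (deriv ξ s) ^ 2 / (1 + normSq (ξ s))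

noncomputable def etaResidual (ξ η : ℝ → ℂ) (s : ℝ) : ℂ :=
  deriv (deriv η) s - 4 * conj (ξ s) * deriv ξ s * deriv η s / (1 + normSq (ξ s)) +
    2 * (conj (η s) + conj (ξ s) ^ 2 * η s) * (deriv ξ s) ^ 2 / (1 + normSq (ξ s)) ^ 2

theorem deriv_deriv_eq_of_eventually_hasDerivAt {𝕜 F : Type*} [NontriviallyNormedField 𝕜]
    [NormedAddCommGroup F] [NormedSpace 𝕜 F] {f f' : 𝕜 → F} {f'' : F} {x : 𝕜}
    (hf : ∀ᶠ y in 𝓝 x, HasDerivAt f (f' y) y) (hf' : HasDerivAt f' f'' x) :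
    deriv (deriv f) x = f'' := by
  have h : deriv f =ᶠ[𝓝 x] f' := hf.mono fun y hy => hy.deriv
  rw [h.deriv_eq]
  exact hf'.deriv

theorem etaResidual_congr_right {ξ η₁ η₂ : ℝ → ℂ} {s : ℝ} (h : η₁ =ᶠ[𝓝 s] η₂) :
    etaResidual ξ η₁ s = etaResidual ξ η₂ s := by
  simp only [etaResidual, h.deriv.deriv_eq, h.deriv_eq, h.eq_of_nhds]

section Rotation

variable {z : ℂ}

theorem conj_mul_self_of_norm_eq_one (hz : ‖z‖ = 1) : conj z * z = 1 := by
  rw [conj_mul', hz]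
  norm_num

theorem normSq_mul_of_norm_eq_one (hz : ‖z‖ = 1) (w : ℂ) : normSq (w * z) = normSq w := by
  rw [normSq_mul, normSq_eq_norm_sq z, hz, one_pow, mul_one]

theorem xiResidual_mul_const (hz : ‖z‖ = 1) (ξ : ℝ → ℂ) (s : ℝ) :
    xiResidual (fun t => ξ t * z) s = xiResidual ξ s * z := by
  simp only [xiResidual, deriv_mul_const_field', map_mul, normSq_mul_of_norm_eq_one hz]
  linear_combination (-2 * conj (ξ s) * deriv ξ s ^ 2 * z / (1 + normSq (ξ s))) *
    conj_mul_self_of_norm_eq_one hz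

theorem etaResidual_mul_const (hz : ‖z‖ = 1) (ξ η : ℝ → ℂ) (s : ℝ) :
    etaResidual (fun t => ξ t * z) (fun t => η t * z) s = etaResidual ξ η s * z := by
  simp only [etaResidual, deriv_mul_const_field', map_mul, normSq_mul_of_norm_eq_one hz]
  linear_combination (-4 * conj (ξ s) * deriv ξ s * deriv η s * z / (1 + normSq (ξ s)) +
    2 * (conj (η s) + conj (ξ s) ^ 2 * η s * (conj z * z + 1)) * deriv ξ s ^ 2 * z /
      (1 + normSq (ξ s)) ^ 2) * conj_mul_self_of_norm_eq_one hz

end Rotation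

theorem hasDerivAt_ofReal_id (x : ℝ) : HasDerivAt (fun s : ℝ => (s : ℂ)) 1 x := by
  simpa using (hasDerivAt_id x).ofReal_comp

theorem one_add_ofReal_tan_sq_ne_zero (y : ℝ) : 1 + (Real.tan y : ℂ) ^ 2 ≠ 0 := by
  exact_mod_cast (by positivity : 1 + Real.tan y ^ 2 ≠ 0)

section TanCurve

variable {c x : ℝ}

theorem hasDerivAt_ofReal_tan_mul (h : Real.cos (c * x) ≠ 0) :
    HasDerivAt (fun s : ℝ => (Real.tan (c * s) : ℂ)) (c * (1 + Real.tan (c * x) ^ 2)) x := by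
  have hlin : HasDerivAt (fun s : ℝ => c * s) c x := by
    simpa using (hasDerivAt_id x).const_mul c
  refine ((Real.hasDerivAt_tan h).comp x hlin).ofReal_comp.congr_deriv ?_
  rw [one_div, ← Real.inv_one_add_tan_sq h, inv_inv]
  push_cast
  ring

theorem eventually_cos_mul_ne_zero (h : Real.cos (c * x) ≠ 0) :
    ∀ᶠ s in 𝓝 x, Real.cos (c * s) ≠ 0 :=
  (Real.continuous_cos.comp (continuous_const_mul c)).continuousAt.eventually_ne h

theorem eventually_hasDerivAt_ofReal_tan_mul (h : Real.cos (c * x) ≠ 0) :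
    ∀ᶠ s in 𝓝 x, HasDerivAt (fun s : ℝ => (Real.tan (c * s) : ℂ))
      (c * (1 + Real.tan (c * s) ^ 2)) s :=
  (eventually_cos_mul_ne_zero h).mono fun _ => hasDerivAt_ofReal_tan_mul

theorem xiResidual_ofReal_tan_mul (h : Real.cos (c * x) ≠ 0) :
    xiResidual (fun s => (Real.tan (c * s) : ℂ)) x = 0 := by
  have hT := hasDerivAt_ofReal_tan_mul h
  have hT' : HasDerivAt (fun s : ℝ => c * (1 + (Real.tan (c * s) : ℂ) ^ 2))
      (2 * c ^ 2 * Real.tan (c * x) * (1 + (Real.tan (c * x) : ℂ) ^ 2)) x :=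
    (((hT.fun_pow 2).const_add 1).const_mul (c : ℂ)).congr_deriv (by ring)
  rw [xiResidual, deriv_deriv_eq_of_eventually_hasDerivAt
    (eventually_hasDerivAt_ofReal_tan_mul h) hT', hT.deriv]
  have hp := one_add_ofReal_tan_sq_ne_zero (c * x)
  simp only [conj_ofReal, normSq_ofReal, ofReal_mul]
  field_simp
  ring

theorem etaResidual_ofReal_tan_mul (h : Real.cos (c * x) ≠ 0) (a b : ℝ) :
    etaResidual (fun s => (Real.tan (c * s) : ℂ))
      (fun s => a * Real.tan (c * s) - I * b * s * (1 + (Real.tan (c * s) : ℂ) ^ 2)) x = 0 := by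
  have hT := hasDerivAt_ofReal_tan_mul h
  have hη : ∀ᶠ s in 𝓝 x, HasDerivAt
      (fun s => a * Real.tan (c * s) - I * b * s * (1 + (Real.tan (c * s) : ℂ) ^ 2))
      (c * a * (1 + Real.tan (c * s) ^ 2) -
        I * b * (1 + Real.tan (c * s) ^ 2) * (1 + 2 * c * s * Real.tan (c * s))) s := by
    filter_upwards [eventually_hasDerivAt_ofReal_tan_mul h] with s hs
    refine ((hs.const_mul (a : ℂ)).sub (((hasDerivAt_ofReal_id s).const_mul (I * b)).fun_mul
      ((hs.fun_pow 2).const_add 1))).congr_deriv ?_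
    ring
  have hη' : HasDerivAt (fun s : ℝ => c * a * (1 + (Real.tan (c * s) : ℂ) ^ 2) -
        I * b * (1 + (Real.tan (c * s) : ℂ) ^ 2) * (1 + 2 * c * s * Real.tan (c * s)))
      (2 * c ^ 2 * a * Real.tan (c * x) * (1 + Real.tan (c * x) ^ 2) -
        I * b * (1 + Real.tan (c * x) ^ 2) *
          (4 * c * Real.tan (c * x) + 2 * c ^ 2 * x * (1 + 3 * Real.tan (c * x) ^ 2))) x := by
    refine ((((hT.fun_pow 2).const_add 1).const_mul (c * a : ℂ)).sub
      ((((hT.fun_pow 2).const_add 1).const_mul (I * b)).fun_mul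
        ((((hasDerivAt_ofReal_id x).const_mul (2 * c : ℂ)).fun_mul hT).const_add 1))).congr_deriv ?_
    ring
  rw [etaResidual, deriv_deriv_eq_of_eventually_hasDerivAt hη hη', hη.self_of_nhds.deriv,
    hT.deriv]
  have hp := one_add_ofReal_tan_sq_ne_zero (c * x)
  simp only [map_add, map_sub, map_mul, map_one, map_pow, conj_ofReal, conj_I, normSq_ofReal,
    ofReal_mul]
  field_simp
  ring

end TanCurve

theorem sin_two_mul_sub_div_cos_sq_eq_tan {c C₁ C₅ s : ℝ} (h : Real.cos (c * s) ≠ 0) :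
    (((C₅ * Real.sin (2 * c * s) : ℝ) : ℂ) - I * ((C₁ * s : ℝ) : ℂ)) /
        ((4 * c * Real.cos (c * s) ^ 2 : ℝ) : ℂ) =
      ((C₅ / (2 * c) : ℝ) : ℂ) * Real.tan (c * s) -
        I * ((C₁ / (4 * c) : ℝ) : ℂ) * s * (1 + (Real.tan (c * s) : ℂ) ^ 2) := by
  have hre : C₅ * Real.sin (2 * c * s) / (4 * c * Real.cos (c * s) ^ 2) =
      C₅ / (2 * c) * Real.tan (c * s) := by
    rw [mul_assoc, Real.sin_two_mul, Real.tan_eq_sin_div_cos]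
    field_simp
    ring
  have him : C₁ * s / (4 * c * Real.cos (c * s) ^ 2) =
      C₁ / (4 * c) * s * (1 + Real.tan (c * s) ^ 2) := by
    rw [← inv_inv (1 + _), Real.inv_one_add_tan_sq h]
    field_simp
  rw [sub_div, mul_div_assoc, ← ofReal_div, ← ofReal_div, hre, him]
  push_cast
  ring

theorem explicit_geodesic_general (θ C₁ C₂ C₅ : ℝ)
    (I : Set ℝ)
    (hcos : ∀ s ∈ I, Real.cos (C₂ * s) ≠ 0)
    (ξ η : ℝ → ℂ)
    (hξ : ∀ s : ℝ, ξ s = (Real.tan (C₂ * s) : ℂ) * Complex.exp (θ * Complex.I))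
    (hη : ∀ s : ℝ, η s =
      (((C₅ * Real.sin (2 * C₂ * s) : ℝ) : ℂ) - Complex.I * ((C₁ * s : ℝ) : ℂ)) /
        ((4 * C₂ * Real.cos (C₂ * s) ^ 2 : ℝ) : ℂ) * Complex.exp (θ * Complex.I)) :
    ∀ s ∈ I,
      deriv (deriv ξ) s - 2 * conj (ξ s) * (deriv ξ s) ^ 2 / (1 + normSq (ξ s)) = 0 ∧
      deriv (deriv η) s - 4 * conj (ξ s) * deriv ξ s * deriv η s / (1 + normSq (ξ s)) +
        2 * (conj (η s) + conj (ξ s) ^ 2 * η s) * (deriv ξ s) ^ 2 /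
          (1 + normSq (ξ s)) ^ 2 = 0 := by
  intro s hs
  have hz := norm_exp_ofReal_mul_I θ
  have hη₀ := (eventually_cos_mul_ne_zero (hcos s hs)).mono fun t ht =>
    sin_two_mul_sub_div_cos_sq_eq_tan (C₁ := C₁) (C₅ := C₅) ht
  have hξres := xiResidual_mul_const hz (fun t => (Real.tan (C₂ * t) : ℂ)) s
  rw [xiResidual_ofReal_tan_mul (hcos s hs), zero_mul] at hξres
  have hηres := etaResidual_mul_const hz (fun t => (Real.tan (C₂ * t) : ℂ))
    (fun t => (((C₅ * Real.sin (2 * C₂ * t) : ℝ) : ℂ) - Complex.I * ((C₁ * t : ℝ) : ℂ)) /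
      ((4 * C₂ * Real.cos (C₂ * t) ^ 2 : ℝ) : ℂ)) s
  rw [etaResidual_congr_right hη₀, etaResidual_ofReal_tan_mul (hcos s hs), zero_mul] at hηres
  rw [funext hξ, funext hη]
  exact ⟨hξres, hηres⟩

/-- the explicit curve `ξ(s) = tan(C₂s)·e^{iθ}`,
`η(s) = (C₅·sin(2C₂s) − i·C₁·s)/(4C₂·cos²(C₂s))·e^{iθ}` satisfies the geodesic
equations of the neutral Kähler metric on any open interval where `cos(C₂s) ≠ 0`. -/
theorem explicit_geodesic (θ C₁ C₂ C₅ : ℝ) (hC₂ : C₂ ≠ 0)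
    (I : Set ℝ) (hIopen : IsOpen I) (hIconn : I.OrdConnected)
    (hcos : ∀ s ∈ I, Real.cos (C₂ * s) ≠ 0)
    (ξ η : ℝ → ℂ)
    (hξ : ∀ s : ℝ, ξ s = (Real.tan (C₂ * s) : ℂ) * Complex.exp (θ * Complex.I))
    (hη : ∀ s : ℝ, η s =
      (((C₅ * Real.sin (2 * C₂ * s) : ℝ) : ℂ) - Complex.I * ((C₁ * s : ℝ) : ℂ)) /
        ((4 * C₂ * Real.cos (C₂ * s) ^ 2 : ℝ) : ℂ) * Complex.exp (θ * Complex.I)) :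
    ∀ s ∈ I,
      deriv (deriv ξ) s - 2 * conj (ξ s) * (deriv ξ s) ^ 2 / (1 + normSq (ξ s)) = 0 ∧
      deriv (deriv η) s - 4 * conj (ξ s) * deriv ξ s * deriv η s / (1 + normSq (ξ s)) +
        2 * (conj (η s) + conj (ξ s) ^ 2 * η s) * (deriv ξ s) ^ 2 /
          (1 + normSq (ξ s)) ^ 2 = 0 :=
  explicit_geodesic_general θ C₁ C₂ C₅ I hcos ξ η hξ hη
end

section
/- Let I ⊆ ℝ be an open interval and (ξ,η) : I → ℂ² a twice continuously differentiable curve satisfying the geodesic equations of the neutral Kähler metric. Then the function E(s) = (2i/(1+|ξ(s)|²)²)·(η'(s)·conj(ξ'(s)) − conj(η'(s))·ξ'(s) + 2·(ξ(s)·conj(η(s)) − conj(ξ(s))·η(s))·|ξ'(s)|²/(1+|ξ(s)|²)) is real-valued and constant on I. -/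
/-!
Complex conjugation fixes `E`, because the bracket is purely imaginary; so `E` is real.
Differentiating `E` along the curve and eliminating `ξ''` and `η''` with the geodesic equations
gives `E' = 0` identically, and an open order-connected subset of `ℝ` is preconnected, so `E` is
constant on it.
-/

open Complex ComplexConjugate

/-- `E` at the point `(ξ, η) = (u, v)` with velocity `(ξ', η') = (A, B)`. -/
noncomputable def neutralEnergy (u v A B : ℂ) : ℂ :=
  (2 * Complex.I / (1 + normSq u) ^ 2) *
    (B * conj A - conj B * A + 2 * (u * conj v - conj u * v) * normSq A / (1 + normSq u))

theorem conj_neutralEnergy (u v A B : ℂ) :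
    conj (neutralEnergy u v A B) = neutralEnergy u v A B := by
  simp only [neutralEnergy, map_mul, map_div₀, map_sub, map_add, map_one, map_ofNat, map_pow,
    conj_I, conj_conj, conj_ofReal]
  ring

theorem neutralEnergy_im (u v A B : ℂ) : (neutralEnergy u v A B).im = 0 :=
  conj_eq_iff_im.mp (conj_neutralEnergy u v A B)

theorem HasDerivAt.conj {f : ℝ → ℂ} {f' : ℂ} {x : ℝ} (h : HasDerivAt f f' x) :
    HasDerivAt (fun t => conj (f t)) (conj f') x := by
  simpa only [Complex.star_def] using h.star

theorem HasDerivAt.ofReal_normSq {f : ℝ → ℂ} {f' : ℂ} {x : ℝ} (h : HasDerivAt f f' x) :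
    HasDerivAt (fun t => (normSq (f t) : ℂ)) (f' * conj (f x) + f x * conj f') x := by
  simp only [← mul_conj]
  exact h.mul h.conj

theorem one_add_normSq_ne_zero (u : ℂ) : (1 : ℂ) + normSq u ≠ 0 := by
  exact_mod_cast (add_pos_of_pos_of_nonneg one_pos (normSq_nonneg u)).ne'

theorem hasDerivAt_neutralEnergy_of_geodesic {ξ η ξ' η' : ℝ → ℂ} {a b : ℂ} {s : ℝ}
    (hξ : HasDerivAt ξ (ξ' s) s) (hη : HasDerivAt η (η' s) s)
    (hξ' : HasDerivAt ξ' a s) (hη' : HasDerivAt η' b s)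
    (ha : a = 2 * conj (ξ s) * ξ' s ^ 2 / (1 + normSq (ξ s)))
    (hb : b = 4 * conj (ξ s) * ξ' s * η' s / (1 + normSq (ξ s)) -
      2 * (conj (η s) + conj (ξ s) ^ 2 * η s) * ξ' s ^ 2 / (1 + normSq (ξ s)) ^ 2) :
    HasDerivAt (fun t => neutralEnergy (ξ t) (η t) (ξ' t) (η' t)) 0 s := by
  have hr := hξ.ofReal_normSq.const_add 1
  have hr0 := one_add_normSq_ne_zero (ξ s)
  have hfront := (hasDerivAt_const s (2 * Complex.I)).div (hr.pow 2) (pow_ne_zero 2 hr0)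
  have hcross := (hη'.mul hξ'.conj).sub (hη'.conj.mul hξ')
  have hsympl := ((hξ.mul hη.conj).sub (hξ.conj.mul hη)).const_mul 2
  have hmain := hfront.mul (hcross.add ((hsympl.mul hξ'.ofReal_normSq).div hr hr0))
  refine hmain.congr_deriv ?_
  subst ha hb
  simp only [Pi.mul_apply, Pi.div_apply, Pi.sub_apply, Pi.add_apply, Pi.pow_apply, map_sub,
    map_div₀, map_mul, map_add, map_one, map_ofNat, map_pow, conj_conj, ← mul_conj]
  field_simp
  ring

theorem ContDiffOn.hasDerivAt_deriv_deriv {𝕜 F : Type*} [NontriviallyNormedField 𝕜]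
    [NormedAddCommGroup F] [NormedSpace 𝕜 F] {I : Set 𝕜} {f : 𝕜 → F} (hf : ContDiffOn 𝕜 2 f I)
    (hI : IsOpen I) {s : 𝕜} (hs : s ∈ I) :
    HasDerivAt f (deriv f s) s ∧ HasDerivAt (deriv f) (deriv (deriv f) s) s :=
  ⟨((hf.differentiableOn two_ne_zero).differentiableAt (hI.mem_nhds hs)).hasDerivAt,
    (((hf.deriv_of_isOpen hI (by norm_num)).differentiableOn one_ne_zero).differentiableAt
      (hI.mem_nhds hs)).hasDerivAt⟩

/-- along any `C²` solution of the geodesic equations of the neutral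
Kähler metric on an open interval, the `G`-norm of the tangent vector
`E(s) = (2i/(1+|ξ|²)²)·(η'·conj(ξ') − conj(η')·ξ' + 2(ξ·conj(η) − conj(ξ)·η)|ξ'|²/(1+|ξ|²))`
is real-valued and constant. -/
theorem geodesic_first_integral
    (I : Set ℝ) (hIopen : IsOpen I) (hIconn : I.OrdConnected)
    (ξ η : ℝ → ℂ)
    (hξ : ContDiffOn ℝ 2 ξ I) (hη : ContDiffOn ℝ 2 η I)
    (hgeo : ∀ s ∈ I,
      deriv (deriv ξ) s - 2 * conj (ξ s) * (deriv ξ s) ^ 2 / (1 + normSq (ξ s)) = 0 ∧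
      deriv (deriv η) s - 4 * conj (ξ s) * deriv ξ s * deriv η s / (1 + normSq (ξ s)) +
        2 * (conj (η s) + conj (ξ s) ^ 2 * η s) * (deriv ξ s) ^ 2 /
          (1 + normSq (ξ s)) ^ 2 = 0)
    (E : ℝ → ℂ)
    (hE : ∀ s : ℝ, E s = (2 * Complex.I / (1 + normSq (ξ s)) ^ 2) *
      (deriv η s * conj (deriv ξ s) - conj (deriv η s) * deriv ξ s +
        2 * (ξ s * conj (η s) - conj (ξ s) * η s) * normSq (deriv ξ s) /
          (1 + normSq (ξ s)))) :
    (∀ s ∈ I, (E s).im = 0) ∧ (∀ s ∈ I, ∀ t ∈ I, E s = E t) := by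
  have hE' : E = fun t => neutralEnergy (ξ t) (η t) (deriv ξ t) (deriv η t) := funext hE
  have hE0 : ∀ s ∈ I, HasDerivAt E 0 s := by
    intro s hs
    obtain ⟨hξ1, hξ2⟩ := hξ.hasDerivAt_deriv_deriv hIopen hs
    obtain ⟨hη1, hη2⟩ := hη.hasDerivAt_deriv_deriv hIopen hs
    obtain ⟨hξgeo, hηgeo⟩ := hgeo s hs
    rw [hE']
    exact hasDerivAt_neutralEnergy_of_geodesic hξ1 hη1 hξ2 hη2 (sub_eq_zero.mp hξgeo)
      (by linear_combination hηgeo)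
  refine ⟨fun s _ => hE' ▸ neutralEnergy_im _ _ _ _, fun s hs t ht => ?_⟩
  exact hIopen.is_const_of_deriv_eq_zero hIconn.isPreconnected
    (fun x hx => (hE0 x hx).differentiableAt.differentiableWithinAt)
    (fun x hx => (hE0 x hx).deriv) hs ht
end

section
/- Let θ, C₁, C₂, C₃ ∈ ℝ with C₂ ≠ 0, let I be an open interval on which cos(C₂s) ≠ 0, set ξ(s) = tan(C₂s)·e^{iθ}, and let η : I → ℂ be twice continuously differentiable, satisfying the η-geodesic equation η'' − 4·conj(ξ)·ξ'·η'/(1+|ξ|²) + 2·(conj(η)+conj(ξ)²·η)·(ξ')²/(1+|ξ|²)² = 0 together with the constraint η(s)·e^{−iθ} − conj(η(s))·e^{iθ} = (C₁s+C₃)/(2i·C₂·cos²(C₂s)) for all s ∈ I. Then u(s) := cos²(C₂s)·η(s) satisfies the forced harmonic oscillator equation u'' + 4C₂²·u = −C₂·(C₁s+C₃)·i·e^{iθ} on I. -/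
/-
Write c = cos(C₂s), S = sin(C₂s), E = e^{iθ}. Along ξ = tan(C₂s)·E one has 1 + |ξ|² = c⁻² and
ξ' = C₂c⁻²E, so c² times the η-equation reads c²η'' − 4C₂Scη' + 2C₂²(c²E² conj η + S²η) = 0.
By the Leibniz rule u'' + 4C₂²u = c²η'' − 4C₂Scη' + 2C₂²(c² + S²)η, which by the η-equation
equals 2C₂²c²(η − E² conj η); the constraint evaluates this to −C₂(C₁s + C₃)·i·E.
-/

open Complex ComplexConjugate

open Filter Topology

section Leibniz

variable {𝕜 F : Type*} [NontriviallyNormedField 𝕜] [NormedAddCommGroup F] [NormedSpace 𝕜 F]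
  {g : 𝕜 → 𝕜} {f : 𝕜 → F} {x : 𝕜}

theorem deriv_deriv_smul (hg : ∀ᶠ y in 𝓝 x, DifferentiableAt 𝕜 g y)
    (hf : ∀ᶠ y in 𝓝 x, DifferentiableAt 𝕜 f y)
    (hg' : DifferentiableAt 𝕜 (deriv g) x) (hf' : DifferentiableAt 𝕜 (deriv f) x) :
    deriv (deriv fun y => g y • f y) x =
      deriv (deriv g) x • f x + (2 : 𝕜) • deriv g x • deriv f x + g x • deriv (deriv f) x := by
  have hfirst : deriv (fun y => g y • f y) =ᶠ[𝓝 x]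
      fun y => g y • deriv f y + deriv g y • f y := by
    filter_upwards [hg, hf] with y hgy hfy
    exact deriv_smul hgy hfy
  rw [hfirst.deriv_eq,
    ((hg.self_of_nhds.hasDerivAt.fun_smul hf'.hasDerivAt).fun_add
      (hg'.hasDerivAt.fun_smul hf.self_of_nhds.hasDerivAt)).deriv, two_smul]
  abel

end Leibniz

section CosSq

theorem hasDerivAt_cos_mul_sq (a t : ℝ) :
    HasDerivAt (fun s => Real.cos (a * s) ^ 2)
      (-(2 * a * Real.sin (a * t) * Real.cos (a * t))) t := by
  refine (((hasDerivAt_const_mul a).cos).fun_pow 2).congr_deriv ?_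
  push_cast; ring

theorem deriv_cos_mul_sq (a : ℝ) :
    deriv (fun s => Real.cos (a * s) ^ 2) =
      fun t => -(2 * a * Real.sin (a * t) * Real.cos (a * t)) :=
  funext fun t => (hasDerivAt_cos_mul_sq a t).deriv

theorem hasDerivAt_deriv_cos_mul_sq (a t : ℝ) :
    HasDerivAt (deriv fun s => Real.cos (a * s) ^ 2)
      (2 * a ^ 2 * (Real.sin (a * t) ^ 2 - Real.cos (a * t) ^ 2)) t := by
  rw [deriv_cos_mul_sq]
  have hlin := hasDerivAt_const_mul (x := t) a
  refine ((hlin.sin.const_mul (2 * a)).fun_mul hlin.cos).fun_neg.congr_deriv ?_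
  ring

theorem deriv_deriv_cos_mul_sq_smul {F : Type*} [NormedAddCommGroup F] [NormedSpace ℝ F]
    {f : ℝ → F} {U : Set ℝ} (hU : IsOpen U) (hf : ContDiffOn ℝ 2 f U) {x : ℝ} (hx : x ∈ U)
    (a : ℝ) :
    deriv (deriv fun t => Real.cos (a * t) ^ 2 • f t) x =
      (2 * a ^ 2 * (Real.sin (a * x) ^ 2 - Real.cos (a * x) ^ 2)) • f x
        - (4 * a * Real.sin (a * x) * Real.cos (a * x)) • deriv f x
        + Real.cos (a * x) ^ 2 • deriv (deriv f) x := by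
  have hf₁ : ∀ᶠ y in 𝓝 x, DifferentiableAt ℝ f y :=
    eventually_of_mem (hU.mem_nhds hx) fun y hy =>
      (hf.differentiableOn two_ne_zero).differentiableAt (hU.mem_nhds hy)
  have hf₂ : DifferentiableAt ℝ (deriv f) x :=
    ((hf.deriv_of_isOpen (m := 1) hU (by norm_num)).differentiableOn one_ne_zero).differentiableAt
      (hU.mem_nhds hx)
  rw [deriv_deriv_smul (.of_forall fun y => (hasDerivAt_cos_mul_sq a y).differentiableAt) hf₁
    (hasDerivAt_deriv_cos_mul_sq a x).differentiableAt hf₂,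
    (hasDerivAt_deriv_cos_mul_sq a x).deriv, deriv_cos_mul_sq]
  module

end CosSq

section GreatCircle

variable {a θ : ℝ}

noncomputable def greatCircle (a θ s : ℝ) : ℂ := (Real.tan (a * s) : ℂ) * exp (θ * I)

theorem hasDerivAt_greatCircle {s : ℝ} (hs : Real.cos (a * s) ≠ 0) :
    HasDerivAt (greatCircle a θ) (((a / Real.cos (a * s) ^ 2 : ℝ) : ℂ) * exp (θ * I)) s := by
  refine (((Real.hasDerivAt_tan hs).comp s (hasDerivAt_const_mul a)).ofReal_comp.mul_const
    _).congr_deriv ?_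
  rw [one_div_mul_eq_div]

theorem conj_greatCircle (s : ℝ) :
    conj (greatCircle a θ s) = Real.tan (a * s) * (exp (θ * I))⁻¹ := by
  rw [greatCircle, map_mul, conj_ofReal, ← exp_conj, ← exp_neg, map_mul, conj_ofReal, conj_I,
    mul_neg]

theorem normSq_greatCircle (s : ℝ) : normSq (greatCircle a θ s) = Real.tan (a * s) ^ 2 := by
  rw [greatCircle, normSq_mul, normSq_ofReal, normSq_eq_norm_sq, norm_exp_ofReal_mul_I]
  ring

theorem cos_sq_mul_geodesic_greatCircle {s : ℝ} (hs : Real.cos (a * s) ≠ 0) (z v w : ℂ) :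
    (Real.cos (a * s) : ℂ) ^ 2 *
      (w - 4 * conj (greatCircle a θ s) * deriv (greatCircle a θ) s * v /
          (1 + normSq (greatCircle a θ s)) +
        2 * (conj z + conj (greatCircle a θ s) ^ 2 * z) * deriv (greatCircle a θ) s ^ 2 /
          (1 + normSq (greatCircle a θ s)) ^ 2) =
      (Real.cos (a * s) : ℂ) ^ 2 * w
        - 4 * a * Real.sin (a * s) * Real.cos (a * s) * v
        + 2 * a ^ 2 * ((Real.cos (a * s) : ℂ) ^ 2 * exp (θ * I) ^ 2 * conj z
          + (Real.sin (a * s) : ℂ) ^ 2 * z) := by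
  have hden : (1 + normSq (greatCircle a θ s) : ℂ) = ((Real.cos (a * s) ^ 2)⁻¹ : ℝ) := by
    rw [normSq_greatCircle, ← Real.inv_one_add_tan_sq hs, inv_inv]
    push_cast; ring
  rw [(hasDerivAt_greatCircle hs).deriv, conj_greatCircle, hden, Real.tan_eq_sin_div_cos]
  have hE := exp_ne_zero (θ * I)
  have hc : (Real.cos (a * s) : ℂ) ≠ 0 := ofReal_ne_zero.mpr hs
  push_cast at hc ⊢
  field_simp

end GreatCircle

theorem sub_exp_sq_mul_conj_eq_of_eq_div {θ : ℝ} {a c K z : ℂ} (ha : a ≠ 0) (hc : c ≠ 0)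
    (h : z * exp (-(θ * I)) - conj z * exp (θ * I) = K / (2 * I * a * c ^ 2)) :
    2 * a ^ 2 * c ^ 2 * (z - exp (θ * I) ^ 2 * conj z) = -(a * K * I * exp (θ * I)) := by
  have hden : 2 * I * a * c ^ 2 ≠ 0 :=
    mul_ne_zero (mul_ne_zero (mul_ne_zero two_ne_zero I_ne_zero) ha) (pow_ne_zero 2 hc)
  rw [exp_neg, eq_div_iff hden] at h
  rw [← h]
  field_simp
  rw [I_sq]
  ring

theorem eta_equation_is_forced_oscillator_general (θ C₁ C₂ C₃ : ℝ) (hC₂ : C₂ ≠ 0)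
    (I : Set ℝ) (hIopen : IsOpen I)
    (hcos : ∀ s ∈ I, Real.cos (C₂ * s) ≠ 0)
    (ξ : ℝ → ℂ)
    (hξ : ∀ s : ℝ, ξ s = (Real.tan (C₂ * s) : ℂ) * Complex.exp (θ * Complex.I))
    (η : ℝ → ℂ) (hη : ContDiffOn ℝ 2 η I)
    (hgeo : ∀ s ∈ I,
      deriv (deriv η) s - 4 * conj (ξ s) * deriv ξ s * deriv η s / (1 + normSq (ξ s)) +
        2 * (conj (η s) + conj (ξ s) ^ 2 * η s) * (deriv ξ s) ^ 2 /
          (1 + normSq (ξ s)) ^ 2 = 0)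
    (hconstraint : ∀ s ∈ I,
      η s * Complex.exp (-(θ * Complex.I)) - conj (η s) * Complex.exp (θ * Complex.I) =
        ((C₁ * s + C₃ : ℝ) : ℂ) / (2 * Complex.I * C₂ * Real.cos (C₂ * s) ^ 2))
    (u : ℝ → ℂ)
    (hu : ∀ s : ℝ, u s = ((Real.cos (C₂ * s) ^ 2 : ℝ) : ℂ) * η s) :
    ∀ s ∈ I, deriv (deriv u) s + 4 * C₂ ^ 2 * u s =
      -C₂ * ((C₁ * s + C₃ : ℝ) : ℂ) * Complex.I * Complex.exp (θ * Complex.I) := by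
  intro s hs
  have hc := hcos s hs
  have hu_smul : u = fun t => Real.cos (C₂ * t) ^ 2 • η t := funext fun t => by
    rw [hu, real_smul]
  have hξ_eq : ξ = greatCircle C₂ θ := funext hξ
  have hgeo_cleared := cos_sq_mul_geodesic_greatCircle (θ := θ) hc (η s) (deriv η s)
    (deriv (deriv η) s)
  rw [← hξ_eq, hgeo s hs, mul_zero] at hgeo_cleared
  have hcon := sub_exp_sq_mul_conj_eq_of_eq_div (ofReal_ne_zero.mpr hC₂) (ofReal_ne_zero.mpr hc)
    (hconstraint s hs)
  rw [hu_smul, deriv_deriv_cos_mul_sq_smul hIopen hη hs]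
  simp only [real_smul]
  push_cast at hgeo_cleared hcon ⊢
  linear_combination hcon - hgeo_cleared

/-- along the great-circle solution `ξ(s) = tan(C₂s)e^{iθ}`, if `η`
satisfies the `η`-geodesic equation together with the first-integral constraint
`η·e^{−iθ} − conj(η)·e^{iθ} = (C₁s+C₃)/(2i·C₂·cos²(C₂s))`, then
`u(s) = cos²(C₂s)·η(s)` satisfies the forced harmonic oscillator equation
`u'' + 4C₂²·u = −C₂(C₁s+C₃)·i·e^{iθ}`. -/
theorem eta_equation_is_forced_oscillator (θ C₁ C₂ C₃ : ℝ) (hC₂ : C₂ ≠ 0)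
    (I : Set ℝ) (hIopen : IsOpen I) (hIconn : I.OrdConnected)
    (hcos : ∀ s ∈ I, Real.cos (C₂ * s) ≠ 0)
    (ξ : ℝ → ℂ)
    (hξ : ∀ s : ℝ, ξ s = (Real.tan (C₂ * s) : ℂ) * Complex.exp (θ * Complex.I))
    (η : ℝ → ℂ) (hη : ContDiffOn ℝ 2 η I)
    (hgeo : ∀ s ∈ I,
      deriv (deriv η) s - 4 * conj (ξ s) * deriv ξ s * deriv η s / (1 + normSq (ξ s)) +
        2 * (conj (η s) + conj (ξ s) ^ 2 * η s) * (deriv ξ s) ^ 2 /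
          (1 + normSq (ξ s)) ^ 2 = 0)
    (hconstraint : ∀ s ∈ I,
      η s * Complex.exp (-(θ * Complex.I)) - conj (η s) * Complex.exp (θ * Complex.I) =
        ((C₁ * s + C₃ : ℝ) : ℂ) / (2 * Complex.I * C₂ * Real.cos (C₂ * s) ^ 2))
    (u : ℝ → ℂ)
    (hu : ∀ s : ℝ, u s = ((Real.cos (C₂ * s) ^ 2 : ℝ) : ℂ) * η s) :
    ∀ s ∈ I, deriv (deriv u) s + 4 * C₂ ^ 2 * u s =
      -C₂ * ((C₁ * s + C₃ : ℝ) : ℂ) * Complex.I * Complex.exp (θ * Complex.I) :=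
  eta_equation_is_forced_oscillator_general θ C₁ C₂ C₃ hC₂ I hIopen hcos ξ hξ η hη hgeo hconstraint
    u hu
end

section
/- Let C₁, C₂ ∈ ℝ with C₂ ≠ 0. For every s ∈ ℝ with cos(C₂s) ≠ 0 and every r ∈ ℝ, Φ(tan(C₂s), −i·C₁·s/(4C₂·cos²(C₂s)), r) = (r·sin(2C₂s) − i·C₁·s/(2C₂), r·cos(2C₂s)) ∈ ℂ×ℝ. (Thus the ruled surface swept out by the non-null geodesic in standard position is the helicoid x¹ = r·sin(2C₂s), x² = −C₁s/(2C₂), x³ = r·cos(2C₂s) when C₁ ≠ 0, and a plane when C₁ = 0.) -/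
open Complex ComplexConjugate

theorem Phi_ofReal_I_mul_ofReal (x b r : ℝ) :
    Phi x (I * b) r =
      (((r * (2 * x / (1 + x ^ 2)) : ℝ) : ℂ) + I * ((2 * b / (1 + x ^ 2) : ℝ) : ℂ),
        r * ((1 - x ^ 2) / (1 + x ^ 2))) := by
  have hx : 1 + x ^ 2 ≠ 0 := by positivity
  have hxC : (1 : ℂ) + x ^ 2 ≠ 0 := by exact_mod_cast hx
  refine Prod.ext ?_ ?_
  · simp only [Phi, normSq_ofReal, map_mul, conj_I, conj_ofReal]
    push_cast
    field_simp
    ring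
  · simp only [Phi, map_mul, conj_I, conj_ofReal, neg_mul, sub_neg_eq_add, normSq_ofReal,
      ofReal_mul, add_neg_cancel, zero_re, mul_zero, zero_add]
    field_simp
    ring

namespace Real

theorem two_mul_tan_div_one_add_tan_sq (θ : ℝ) : 2 * tan θ / (1 + tan θ ^ 2) = sin (2 * θ) := by
  simpa using (sin_eq_two_mul_tan_half_div_one_add_tan_half_sq (2 * θ)).symm

theorem one_sub_tan_sq_div_one_add_tan_sq {θ : ℝ} (hθ : cos θ ≠ 0) :
    (1 - tan θ ^ 2) / (1 + tan θ ^ 2) = cos (2 * θ) := by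
  rw [div_eq_mul_inv, inv_one_add_tan_sq hθ, tan_eq_sin_div_cos, cos_two_mul']
  field_simp

end Real

theorem geodesic_ruled_surface_is_helicoid_general (C₁ C₂ : ℝ) :
    ∀ s : ℝ, Real.cos (C₂ * s) ≠ 0 → ∀ r : ℝ,
      Phi ((Real.tan (C₂ * s) : ℝ) : ℂ)
          (-Complex.I * ((C₁ * s : ℝ) : ℂ) / ((4 * C₂ * Real.cos (C₂ * s) ^ 2 : ℝ) : ℂ)) r =
        (((r * Real.sin (2 * C₂ * s) : ℝ) : ℂ) -
            Complex.I * ((C₁ * s / (2 * C₂) : ℝ) : ℂ),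
         r * Real.cos (2 * C₂ * s)) := by
  intro s hs r
  have hη : -I * ((C₁ * s : ℝ) : ℂ) / ((4 * C₂ * Real.cos (C₂ * s) ^ 2 : ℝ) : ℂ) =
      I * ((-(C₁ * s) / (4 * C₂ * Real.cos (C₂ * s) ^ 2) : ℝ) : ℂ) := by
    push_cast
    ring
  have hcoef : 2 * (-(C₁ * s) / (4 * C₂ * Real.cos (C₂ * s) ^ 2)) / (1 + Real.tan (C₂ * s) ^ 2) =
      -(C₁ * s / (2 * C₂)) := by
    rw [div_eq_mul_inv _ (1 + _), Real.inv_one_add_tan_sq hs]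
    generalize Real.cos (C₂ * s) = c at hs ⊢
    field_simp
    ring
  rw [hη, Phi_ofReal_I_mul_ofReal, hcoef, mul_assoc 2 C₂ s, Real.two_mul_tan_div_one_add_tan_sq,
    Real.one_sub_tan_sq_div_one_add_tan_sq hs, ofReal_neg, mul_neg, ← sub_eq_add_neg]

/-- the ruled surface swept out by the non-null geodesic in standard
position `ξ(s) = tan(C₂s)`, `η(s) = −i·C₁·s/(4C₂·cos²(C₂s))` is the helicoid
`x¹ = r·sin(2C₂s)`, `x² = −C₁s/(2C₂)`, `x³ = r·cos(2C₂s)` (a plane when `C₁ = 0`). -/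
theorem geodesic_ruled_surface_is_helicoid (C₁ C₂ : ℝ) (hC₂ : C₂ ≠ 0) :
    ∀ s : ℝ, Real.cos (C₂ * s) ≠ 0 → ∀ r : ℝ,
      Phi ((Real.tan (C₂ * s) : ℝ) : ℂ)
          (-Complex.I * ((C₁ * s : ℝ) : ℂ) / ((4 * C₂ * Real.cos (C₂ * s) ^ 2 : ℝ) : ℂ)) r =
        (((r * Real.sin (2 * C₂ * s) : ℝ) : ℂ) -
            Complex.I * ((C₁ * s / (2 * C₂) : ℝ) : ℂ),
         r * Real.cos (2 * C₂ * s)) :=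
  geodesic_ruled_surface_is_helicoid_general C₁ C₂
end

section
/- Let c₀ : ℂ → ℂ be an entire function. Then (1+|ξ|²)²·c₀''(ξ) − 2·conj(ξ)·(1+|ξ|²)·c₀'(ξ) + 2·conj(ξ)²·c₀(ξ) − 2·conj(c₀(ξ)) = 0 holds for all ξ ∈ ℂ if and only if there exist α ∈ ℂ and a ∈ ℝ such that c₀(ξ) = α + 2ai·ξ + conj(α)·ξ² for all ξ ∈ ℂ. -/
/-!
Replacing `conj ξ` by an independent variable `ζ` turns the left-hand side into a function
holomorphic on `ℂ × ℂ`; it vanishes on the totally real subspace `{ζ = conj ξ}`, hence everywhere.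
At `ξ = 0` this expresses `conj (c₀ (conj ζ))`, and therefore `c₀`, as a quadratic polynomial.
For `c₀ ξ = A + B ξ + C ξ²` the left-hand side is
`2 (C - conj A) - 2 (B + conj B) conj ξ + 2 (A - conj C) conj ξ ^ 2`,
which vanishes identically exactly when `C = conj A` and `B` is imaginary.
-/

open Complex ComplexConjugate Filter Topology

theorem Differentiable.eq_zero_of_forall_ofReal {E : Type*} [NormedAddCommGroup E]
    [NormedSpace ℂ E] [CompleteSpace E] {f : ℂ → E} (hf : Differentiable ℂ f)
    (h : ∀ x : ℝ, f x = 0) : f = 0 := by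
  have hreal : Tendsto ((↑) : ℝ → ℂ) (𝓝[≠] 0) (𝓝[≠] 0) :=
    tendsto_nhdsWithin_of_tendsto_nhds_of_eventually_within _
      (continuous_ofReal.tendsto' 0 0 ofReal_zero |>.mono_left nhdsWithin_le_nhds)
      (eventually_nhdsWithin_of_forall fun x hx => ofReal_ne_zero.2 hx)
  exact funext fun z =>
    (analyticOnNhd_univ_iff_differentiable.2 hf).eqOn_zero_of_preconnected_of_frequently_eq_zero
      isPreconnected_univ (Set.mem_univ 0) (hreal.frequently (Frequently.of_forall h))
      (Set.mem_univ z)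

/-- In the coordinates `ξ = x + I y`, `ζ = x - I y` the set `{ζ = conj ξ}` is `ℝ × ℝ`, so the
one-variable identity theorem applies first in `x` and then in `y`. -/
theorem Differentiable.eq_zero_of_forall_apply_conj {E : Type*} [NormedAddCommGroup E]
    [NormedSpace ℂ E] [CompleteSpace E] {F : ℂ × ℂ → E} (hF : Differentiable ℂ F)
    (h : ∀ z, F (z, conj z) = 0) : F = 0 := by
  have hreal : ∀ (x : ℂ) (y : ℝ), F (x + I * y, x - I * y) = 0 := fun x y => by
    refine congrFun (Differentiable.eq_zero_of_forall_ofReal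
      (f := fun x => F (x + I * y, x - I * y)) (by fun_prop) fun x => ?_) x
    simpa [sub_eq_add_neg] using h (x + I * y)
  have hG : ∀ x y : ℂ, F (x + I * y, x - I * y) = 0 := fun x y =>
    congrFun (Differentiable.eq_zero_of_forall_ofReal
      (f := fun y => F (x + I * y, x - I * y)) (by fun_prop) (hreal x)) y
  ext ⟨ξ, ζ⟩
  have hξ : (ξ + ζ) / 2 + I * (-I * (ξ - ζ) / 2) = ξ := by
    linear_combination -(ξ - ζ) / 2 * I_sq
  have hζ : (ξ + ζ) / 2 - I * (-I * (ξ - ζ) / 2) = ζ := by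
    linear_combination (ξ - ζ) / 2 * I_sq
  have := hG ((ξ + ζ) / 2) (-I * (ξ - ζ) / 2)
  rwa [hξ, hζ] at this

noncomputable def killingOperator (f : ℂ → ℂ) (ξ : ℂ) : ℂ :=
  ((1 + normSq ξ : ℝ) : ℂ) ^ 2 * deriv (deriv f) ξ -
    2 * conj ξ * ((1 + normSq ξ : ℝ) : ℂ) * deriv f ξ + 2 * conj ξ ^ 2 * f ξ - 2 * conj (f ξ)

noncomputable def killingPolarization (f : ℂ → ℂ) (p : ℂ × ℂ) : ℂ :=
  (1 + p.1 * p.2) ^ 2 * deriv (deriv f) p.1 - 2 * p.2 * (1 + p.1 * p.2) * deriv f p.1 +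
    2 * p.2 ^ 2 * f p.1 - 2 * conj (f (conj p.2))

theorem killingPolarization_apply_conj (f : ℂ → ℂ) (ξ : ℂ) :
    killingPolarization f (ξ, conj ξ) = killingOperator f ξ := by
  simp [killingPolarization, killingOperator, mul_conj]

theorem differentiable_killingPolarization {f : ℂ → ℂ} (hf : Differentiable ℂ f) :
    Differentiable ℂ (killingPolarization f) := by
  have hf₁ := hf.deriv
  have hf₂ := hf₁.deriv
  have hconj : Differentiable ℂ fun z => conj (f (conj z)) := fun z => by
    simpa [Function.comp_def] using (hf (conj z)).conj_conj
  have hconj₂ : Differentiable ℂ fun p : ℂ × ℂ => conj (f (conj p.2)) :=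
    hconj.comp differentiable_snd
  unfold killingPolarization
  fun_prop

theorem exists_quadratic_of_killingOperator_eq_zero {f : ℂ → ℂ} (hf : Differentiable ℂ f)
    (h : ∀ ξ, killingOperator f ξ = 0) : ∃ A B C : ℂ, f = fun z => A + B * z + C * z ^ 2 := by
  have hP : killingPolarization f = 0 :=
    (differentiable_killingPolarization hf).eq_zero_of_forall_apply_conj fun ξ =>
      (killingPolarization_apply_conj f ξ).trans (h ξ)
  refine ⟨conj (deriv (deriv f) 0) / 2, -conj (deriv f 0), conj (f 0), funext fun ξ => ?_⟩
  have h₀ := congrArg conj (congrFun hP (0, conj ξ))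
  simp only [killingPolarization, zero_mul, add_zero, one_pow, one_mul, mul_one,
    RingHomCompTriple.comp_apply, RingHom.id_apply, map_sub, map_add, map_mul, map_ofNat, map_pow,
    Pi.zero_apply, map_zero] at h₀
  linear_combination (-1 / 2 : ℂ) * h₀

theorem killingOperator_quadratic (A B C ξ : ℂ) :
    killingOperator (fun z => A + B * z + C * z ^ 2) ξ =
      2 * (C - conj A) - 2 * (B + conj B) * conj ξ + 2 * (A - conj C) * conj ξ ^ 2 := by
  have hd : deriv (fun z => A + B * z + C * z ^ 2) = fun z => B + 2 * C * z := funext fun z =>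
    ((((hasDerivAt_id' z).const_mul B).const_add A).fun_add
      ((hasDerivAt_pow 2 z).const_mul C)).deriv.trans (by push_cast; ring)
  have hdd : deriv (fun z => B + 2 * C * z) = fun _ => 2 * C := funext fun z =>
    (((hasDerivAt_id' z).const_mul (2 * C)).const_add B).deriv.trans (mul_one _)
  simp only [killingOperator, hd, hdd]
  push_cast
  simp only [map_add, map_mul, map_pow, ← mul_conj]
  ring

theorem killingOperator_quadratic_eq_zero_iff (A B C : ℂ) :
    (∀ ξ, killingOperator (fun z => A + B * z + C * z ^ 2) ξ = 0) ↔
      C = conj A ∧ ∃ a : ℝ, B = 2 * a * I := by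
  simp only [killingOperator_quadratic]
  constructor
  · intro h
    have h₀ := h 0
    have h₁ := h 1
    simp only [map_zero, map_one] at h₀ h₁
    have hC : C = conj A := by linear_combination h₀ / 2
    have hB : B + conj B = 0 := by
      rw [hC, conj_conj] at h₁
      linear_combination -h₁ / 2
    have hBre : B.re = 0 := by simpa [add_conj] using hB
    refine ⟨hC, B.im / 2, Complex.ext ?_ ?_⟩
    · simp [hBre]
    · simp; ring
  · rintro ⟨rfl, a, rfl⟩ ξ
    simp [conj_ofReal, map_ofNat]

/-- an entire function `c₀` satisfies the Killing equation
`(1+|ξ|²)²·c₀'' − 2·conj(ξ)(1+|ξ|²)·c₀' + 2·conj(ξ)²·c₀ − 2·conj(c₀) = 0`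
iff `c₀(ξ) = α + 2ai·ξ + conj(α)·ξ²` for some `α ∈ ℂ`, `a ∈ ℝ`. -/
theorem rotational_killing_fields (c₀ : ℂ → ℂ) (hc₀ : Differentiable ℂ c₀) :
    (∀ ξ : ℂ,
      ((1 + normSq ξ : ℝ) : ℂ) ^ 2 * deriv (deriv c₀) ξ -
        2 * conj ξ * ((1 + normSq ξ : ℝ) : ℂ) * deriv c₀ ξ +
        2 * conj ξ ^ 2 * c₀ ξ - 2 * conj (c₀ ξ) = 0) ↔
    ∃ (α : ℂ) (a : ℝ), ∀ ξ : ℂ,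
      c₀ ξ = α + 2 * (a : ℂ) * Complex.I * ξ + conj α * ξ ^ 2 := by
  change (∀ ξ, killingOperator c₀ ξ = 0) ↔ _
  constructor
  · intro h
    obtain ⟨A, B, C, rfl⟩ := exists_quadratic_of_killingOperator_eq_zero hc₀ h
    obtain ⟨rfl, a, rfl⟩ := (killingOperator_quadratic_eq_zero_iff A B C).1 h
    exact ⟨A, a, fun ξ => rfl⟩
  · rintro ⟨α, a, h⟩
    rw [funext h]
    exact (killingOperator_quadratic_eq_zero_iff _ _ _).2 ⟨rfl, a, rfl⟩
end

section
/- Let ρ, σ, a, b ∈ ℂ and c ∈ ℝ, and set λ = Im(ρ), A = c·((ρ−conj(ρ))·a·conj(b) + σ·a² − conj(σ)·conj(b)²), B = c·(ρ·(|a|²+|b|²) + 2·σ·a·b). Consider the real quadratic form q(x+iy) = Im(A·(x+iy)²) + Im(B)·(x²+y²) on ℝ². Then the determinant of q (i.e. of its symmetric matrix [[Im(A)+Im(B), Re(A)], [Re(A), Im(B)−Im(A)]]) equals (Im B)² − |A|² = c²·(λ² − |σ|²)·(|a|²−|b|²)². In particular, if c ≠ 0 and |a| ≠ |b|, the determinant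 is negative, zero, or positive exactly when λ² − |σ|² is negative, zero, or positive, so q is Lorentzian (indefinite nondegenerate), degenerate, or definite accordingly. -/
/-! The identity `(Im B)² − |A|² = c²(λ² − |σ|²)(|a|² − |b|²)²` is homogeneous of degree two in `c`,
so it reduces to `c = 1`, where it is a polynomial identity in the real and imaginary parts of
`ρ, σ, a, b`. Once it holds, the determinant is `λ² − |σ|²` times the factor
`c²(|a|² − |b|²)²`, which is positive when `c ≠ 0` and `|a| ≠ |b|`. -/

open Complex ComplexConjugate Matrix

theorem im_mul_sq_add_mul_eq_dotProduct_mulVec (A : ℂ) (t x y : ℝ) :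
    (A * ((x : ℂ) + (y : ℂ) * I) ^ 2).im + t * (x ^ 2 + y ^ 2) =
      ![x, y] ⬝ᵥ !![A.im + t, A.re; A.re, t - A.im] *ᵥ ![x, y] := by
  simp only [sq, mul_im, mul_re, add_re, add_im, ofReal_re, ofReal_im, I_re, I_im,
    dotProduct, mulVec, Fin.sum_univ_two, of_apply, cons_val_zero, cons_val_one]
  ring

theorem det_eq_sq_sub_norm_sq (A : ℂ) (t : ℝ) :
    (A.im + t) * (t - A.im) - A.re ^ 2 = t ^ 2 - ‖A‖ ^ 2 := by
  rw [Complex.sq_norm, normSq_apply]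
  ring

theorem im_sq_sub_norm_sq_eq_mul_sq_sub_sq (ρ σ a b : ℂ) :
    (ρ * ((normSq a : ℝ) + (normSq b : ℝ)) + 2 * σ * a * b).im ^ 2 -
        ‖(ρ - conj ρ) * a * conj b + σ * a ^ 2 - conj σ * conj b ^ 2‖ ^ 2 =
      (ρ.im ^ 2 - ‖σ‖ ^ 2) * (‖a‖ ^ 2 - ‖b‖ ^ 2) ^ 2 := by
  simp only [Complex.sq_norm]
  simp only [normSq_apply, sq, mul_im, mul_re, add_re, add_im, sub_re, sub_im, conj_re, conj_im,
    ofReal_re, ofReal_im, re_ofNat, im_ofNat]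
  ring

theorem im_ofReal_mul_sq_sub_norm_sq (c : ℝ) (z w : ℂ) :
    ((c : ℂ) * z).im ^ 2 - ‖(c : ℂ) * w‖ ^ 2 = c ^ 2 * (z.im ^ 2 - ‖w‖ ^ 2) := by
  rw [im_ofReal_mul, norm_mul, norm_real, Real.norm_eq_abs, mul_pow, mul_pow, sq_abs]
  ring

theorem sign_iff_of_eq_mul_pos {D E k : ℝ} (hk : 0 < k) (h : D = E * k) :
    (D < 0 ↔ E < 0) ∧ (D = 0 ↔ E = 0) ∧ (0 < D ↔ 0 < E) := by
  subst h
  refine ⟨?_, by simp [hk.ne'], mul_pos_iff_of_pos_right hk⟩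
  rw [← neg_pos, ← neg_mul, mul_pos_iff_of_pos_right hk, neg_pos]

theorem sq_mul_sq_sub_sq_pos {c : ℝ} {a b : ℂ} (hc : c ≠ 0) (hab : ‖a‖ ≠ ‖b‖) :
    0 < c ^ 2 * (‖a‖ ^ 2 - ‖b‖ ^ 2) ^ 2 := by
  have hsq : ‖a‖ ^ 2 - ‖b‖ ^ 2 ≠ 0 :=
    sub_ne_zero.mpr fun h => hab ((pow_left_inj₀ (norm_nonneg a) (norm_nonneg b) two_ne_zero).mp h)
  positivity

/-- the determinant of the induced metric
`q(x+iy) = Im(A·(x+iy)²) + Im(B)·(x²+y²)` on a line congruence, where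
`A = c((ρ−conj ρ)a·conj(b) + σa² − conj(σ)conj(b)²)` and
`B = c(ρ(|a|²+|b|²) + 2σab)`, equals `(Im B)² − |A|²
= c²(λ²−|σ|²)(|a|²−|b|²)²` with `λ = Im ρ`; in particular, for `c ≠ 0` and
`|a| ≠ |b|` its sign is the sign of `λ² − |σ|²`. -/
theorem induced_metric_determinant (ρ σ a b : ℂ) (c : ℝ)
    (A B : ℂ)
    (hA : A = (c : ℂ) * ((ρ - conj ρ) * a * conj b + σ * a ^ 2 - conj σ * conj b ^ 2))
    (hB : B = (c : ℂ) * (ρ * ((normSq a : ℝ) + (normSq b : ℝ)) + 2 * σ * a * b))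
    (D : ℝ) (hD : D = (A.im + B.im) * (B.im - A.im) - A.re ^ 2) :
    (∀ x y : ℝ, (A * ((x : ℂ) + (y : ℂ) * Complex.I) ^ 2).im + B.im * (x ^ 2 + y ^ 2) =
      ![x, y] ⬝ᵥ (!![A.im + B.im, A.re; A.re, B.im - A.im]).mulVec ![x, y]) ∧
    D = B.im ^ 2 - ‖A‖ ^ 2 ∧
    D = c ^ 2 * (ρ.im ^ 2 - ‖σ‖ ^ 2) *
      (‖a‖ ^ 2 - ‖b‖ ^ 2) ^ 2 ∧
    (c ≠ 0 → ‖a‖ ≠ ‖b‖ →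
      ((D < 0 ↔ ρ.im ^ 2 - ‖σ‖ ^ 2 < 0) ∧
       (D = 0 ↔ ρ.im ^ 2 - ‖σ‖ ^ 2 = 0) ∧
       (0 < D ↔ 0 < ρ.im ^ 2 - ‖σ‖ ^ 2))) := by
  have hD_norm : D = B.im ^ 2 - ‖A‖ ^ 2 := hD.trans (det_eq_sq_sub_norm_sq A B.im)
  have hD_factor : D = c ^ 2 * (ρ.im ^ 2 - ‖σ‖ ^ 2) * (‖a‖ ^ 2 - ‖b‖ ^ 2) ^ 2 := by
    rw [hD_norm, hA, hB, im_ofReal_mul_sq_sub_norm_sq, im_sq_sub_norm_sq_eq_mul_sq_sub_sq, mul_assoc]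
  refine ⟨im_mul_sq_add_mul_eq_dotProduct_mulVec A B.im, hD_norm, hD_factor,
    fun hc hab => sign_iff_of_eq_mul_pos (sq_mul_sq_sub_sq_pos hc hab) ?_⟩
  rw [hD_factor]
  ring
end

section
/- Let ρ, σ, a, b ∈ ℂ and c ∈ ℝ with c ≠ 0, |a| ≠ |b|, and Im(ρ) = 0 (the twist-free, i.e. Lagrangian, case). Set A = c·((ρ−conj(ρ))·a·conj(b) + σ·a² − conj(σ)·conj(b)²), B = c·(ρ·(|a|²+|b|²) + 2·σ·a·b), and q(x+iy) = Im(A·(x+iy)²) + Im(B)·(x²+y²) on ℝ². If σ = 0 then q is identically zero (the metric is totally null); if σ ≠ 0 then q is nondegenerate and indefinite of signature (1,1) (the metric is Lorentzian). Hence the metric induced on a Lagrangian surface is either Lorentzian or totally null. -/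
open Complex ComplexConjugate

/-!
With `Im ρ = 0` the `ρ`-terms cancel and the metric becomes `q z = Im (c σ w²)` with
`w = a z + b z̄`. When `|a| ≠ |b|` the substitution `z ↦ w` is an `ℝ`-linear automorphism of `ℂ`,
and for `c σ ≠ 0` a complex rescaling `w ↦ ζ w` with `c σ ζ² = 1` turns `Im (c σ w²)` into
`Im (w²) = 2 xy`, which is `u² - v²` in the coordinates `x = u + v`, `y = (u - v) / 2`.
-/

namespace Complex

theorem lagrangian_metric_eq_im_sq (ρ σ a b z : ℂ) (c : ℝ) (hρ : ρ.im = 0) :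
    ((c : ℂ) * ((ρ - conj ρ) * a * conj b + σ * a ^ 2 - conj σ * conj b ^ 2) * z ^ 2).im +
        ((c : ℂ) * (ρ * ((normSq a : ℝ) + (normSq b : ℝ)) + 2 * σ * a * b)).im * normSq z =
      ((c : ℂ) * σ * (a * z + b * conj z) ^ 2).im := by
  simp only [mul_im, mul_re, add_im, add_re, sub_im, sub_re, conj_re, conj_im, ofReal_re,
    ofReal_im, normSq_apply, pow_two, re_ofNat, im_ofNat, hρ]
  ring

def addConjMul (a b : ℂ) : ℂ →ₗ[ℝ] ℂ where
  toFun z := a * z + b * conj z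
  map_add' z w := by simp only [map_add]; ring
  map_smul' r z := by simp only [real_smul, map_mul, conj_ofReal, RingHom.id_apply]; ring

theorem addConjMul_injective {a b : ℂ} (hab : ‖a‖ ≠ ‖b‖) :
    Function.Injective (addConjMul a b) := by
  rw [← LinearMap.ker_eq_bot, LinearMap.ker_eq_bot']
  intro z hz
  have hnorm : ‖a‖ * ‖z‖ = ‖b‖ * ‖z‖ := by
    rw [← norm_mul, ← norm_conj z, ← norm_mul, eq_neg_of_add_eq_zero_left hz, norm_neg]
  by_contra hz0
  exact hab (mul_right_cancel₀ (norm_ne_zero_iff.mpr hz0) hnorm)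

noncomputable def lightconeCoords : (ℝ × ℝ) ≃ₗ[ℝ] ℂ where
  toFun p := ⟨p.1 + p.2, (p.1 - p.2) / 2⟩
  invFun w := (w.re / 2 + w.im, w.re / 2 - w.im)
  map_add' p p' := by
    apply Complex.ext <;> simp only [Prod.fst_add, Prod.snd_add, add_re, add_im] <;> ring
  map_smul' r p := by
    apply Complex.ext <;>
      simp only [Prod.smul_fst, Prod.smul_snd, smul_eq_mul, real_smul, RingHom.id_apply,
        re_ofReal_mul, im_ofReal_mul] <;> ring
  left_inv p := by ext <;> simp only <;> ring
  right_inv w := by apply Complex.ext <;> simp only <;> ring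

theorem im_sq_lightconeCoords (p : ℝ × ℝ) : (lightconeCoords p ^ 2).im = p.1 ^ 2 - p.2 ^ 2 := by
  simp only [lightconeCoords, LinearEquiv.coe_mk, LinearMap.coe_mk, AddHom.coe_mk, sq, mul_im]
  ring

theorem exists_linearEquiv_im_mul_sq_addConjMul {κ a b : ℂ} (hκ : κ ≠ 0) (hab : ‖a‖ ≠ ‖b‖) :
    ∃ L : (ℝ × ℝ) ≃ₗ[ℝ] ℂ, ∀ p : ℝ × ℝ,
      (κ * (a * L p + b * conj (L p)) ^ 2).im = p.1 ^ 2 - p.2 ^ 2 := by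
  obtain ⟨ζ, hζ⟩ := IsAlgClosed.exists_eq_mul_self κ⁻¹
  have hζ0 : ζ ≠ 0 := by rintro rfl; simp [hκ] at hζ
  let F := LinearEquiv.ofInjectiveEndo (addConjMul a b) (addConjMul_injective hab)
  let S := (LinearEquiv.smulOfNeZero ℂ ℂ ζ hζ0).restrictScalars ℝ
  refine ⟨lightconeCoords.trans (S.trans F.symm), fun p => ?_⟩
  have hF : a * F.symm (ζ * lightconeCoords p) + b * conj (F.symm (ζ * lightconeCoords p)) =
      ζ * lightconeCoords p :=
    F.apply_symm_apply _
  have hκζ : κ * ζ ^ 2 = 1 := by rw [sq, ← hζ, mul_inv_cancel₀ hκ]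
  simp only [LinearEquiv.trans_apply, S, LinearEquiv.restrictScalars_apply,
    LinearEquiv.smulOfNeZero_apply, smul_eq_mul, hF]
  calc (κ * (ζ * lightconeCoords p) ^ 2).im
      = ((κ * ζ ^ 2) * lightconeCoords p ^ 2).im := by ring_nf
    _ = p.1 ^ 2 - p.2 ^ 2 := by rw [hκζ, one_mul, im_sq_lightconeCoords]

end Complex

/-- in the Lagrangian (twist-free) case `Im ρ = 0`, the induced
metric `q(x+iy) = Im(A·(x+iy)²) + Im(B)·(x²+y²)` on a line congruence is
identically zero if the shear `σ` vanishes, and is nondegenerate indefinite of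
signature `(1,1)` (Lorentzian) if `σ ≠ 0`. -/
theorem lagrangian_metric_lorentz_or_null (ρ σ a b : ℂ) (c : ℝ)
    (hc : c ≠ 0) (hab : ‖a‖ ≠ ‖b‖) (htwist : ρ.im = 0)
    (A B : ℂ)
    (hA : A = (c : ℂ) * ((ρ - conj ρ) * a * conj b + σ * a ^ 2 - conj σ * conj b ^ 2))
    (hB : B = (c : ℂ) * (ρ * ((normSq a : ℝ) + (normSq b : ℝ)) + 2 * σ * a * b))
    (q : ℂ → ℝ) (hq : ∀ z : ℂ, q z = (A * z ^ 2).im + B.im * normSq z) :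
    (σ = 0 → ∀ z : ℂ, q z = 0) ∧
    (σ ≠ 0 → ∃ L : (ℝ × ℝ) ≃ₗ[ℝ] ℂ, ∀ p : ℝ × ℝ, q (L p) = p.1 ^ 2 - p.2 ^ 2) := by
  have hq_sq : ∀ z, q z = ((c : ℂ) * σ * (a * z + b * conj z) ^ 2).im := fun z => by
    rw [hq, hA, hB, lagrangian_metric_eq_im_sq ρ σ a b z c htwist]
  refine ⟨fun hσ z => by simp [hq_sq, hσ], fun hσ => ?_⟩
  obtain ⟨L, hL⟩ :=
    exists_linearEquiv_im_mul_sq_addConjMul (mul_ne_zero (ofReal_ne_zero.mpr hc) hσ) hab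
  exact ⟨L, fun p => (hq_sq _).trans (hL p)⟩
end
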